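/- arXiv:1201.2592 — 4 statements merged into one kernel-verified Lean document; each statement's English description precedes it below -/
import Mathlib

section
/- Let E, A be n×n real matrices, b, c ∈ ℝⁿ, and let σ ∈ ℂ be such that σE − A is invertible. Suppose V, W ∈ ℂ^{n×r} are such that (σE − A)⁻¹b ∈ Range(V), and that the r×r matrices Eᵣ = WᵀEV, Aᵣ = WᵀAV satisfy that σEᵣ − Aᵣ is invertible. Then with bᵣ = Wᵀb and cᵣᵀ = cᵀV, the reduced transfer function Gᵣ(σ) = cᵣᵀ(σEᵣ − Aᵣ)⁻¹bᵣ equals G(σ) = cᵀ(σE − A)⁻¹b. -/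
open Matrix

/-! Since `(σE - A)⁻¹ b = V x`, applying `Wᵀ (σE - A)` gives `(σEᵣ - Aᵣ) x = bᵣ`, so
`(σEᵣ - Aᵣ)⁻¹ bᵣ = x` and `Gᵣ(σ) = cᵀ V x = cᵀ (σE - A)⁻¹ b = G(σ)`. -/

namespace Matrix

variable {R : Type*} [CommRing R] {m n : Type*} [Fintype n]

theorem smul_mul_mul_sub_mul_mul (σ : R) (L : Matrix m n R) (E A : Matrix n n R)
    (V : Matrix n m R) : σ • (L * E * V) - L * A * V = L * (σ • E - A) * V := by
  rw [Matrix.mul_sub, Matrix.sub_mul, Matrix.mul_smul, Matrix.smul_mul]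

variable [Fintype m] [DecidableEq m] [DecidableEq n]

theorem inv_mul_mul_mulVec_eq_of_mulVec_eq_inv_mulVec {L : Matrix m n R} {K : Matrix n n R}
    {V : Matrix n m R} (hK : IsUnit K) (hLKV : IsUnit (L * K * V)) {x : m → R} {b : n → R}
    (hx : V *ᵥ x = K⁻¹ *ᵥ b) : (L * K * V)⁻¹ *ᵥ (L *ᵥ b) = x := by
  have hsolve : (L * K * V) *ᵥ x = L *ᵥ b := by
    rw [← mulVec_mulVec, hx, mulVec_mulVec, Matrix.mul_assoc,
      mul_nonsing_inv _ ((isUnit_iff_isUnit_det K).mp hK), Matrix.mul_one]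
  rw [← hsolve, mulVec_mulVec, nonsing_inv_mul _ ((isUnit_iff_isUnit_det _).mp hLKV),
    one_mulVec]

theorem transpose_mulVec_dotProduct_inv_mul_mul_mulVec {L : Matrix m n R} {K : Matrix n n R}
    {V : Matrix n m R} (hK : IsUnit K) (hLKV : IsUnit (L * K * V)) (c b : n → R)
    (hrange : ∃ x, V *ᵥ x = K⁻¹ *ᵥ b) :
    (Vᵀ *ᵥ c) ⬝ᵥ (L * K * V)⁻¹ *ᵥ (L *ᵥ b) = c ⬝ᵥ K⁻¹ *ᵥ b := by
  obtain ⟨x, hx⟩ := hrange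
  rw [inv_mul_mul_mulVec_eq_of_mulVec_eq_inv_mulVec hK hLKV hx, ← hx, dotProduct_mulVec,
    mulVec_transpose]

end Matrix

/-- Interpolation at σ via the input rational Krylov condition:
if `(σE - A)⁻¹ b ∈ Range(V)` then the Petrov–Galerkin reduced model matches
the transfer function at σ: `Gᵣ(σ) = G(σ)`. -/
theorem reduced_transfer_interpolates_input
    {n r : ℕ} (E A : Matrix (Fin n) (Fin n) ℝ) (b c : Fin n → ℝ)
    (σ : ℂ) (V W : Matrix (Fin n) (Fin r) ℂ)
    (K : Matrix (Fin n) (Fin n) ℂ)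
    (hK : K = σ • E.map (Complex.ofReal) - A.map (Complex.ofReal))
    (Kr : Matrix (Fin r) (Fin r) ℂ)
    (hKr : Kr = σ • (Wᵀ * E.map (Complex.ofReal) * V) - Wᵀ * A.map (Complex.ofReal) * V)
    (hinv : IsUnit K)
    (hinvr : IsUnit Kr)
    (hrange : ∃ x : Fin r → ℂ, V.mulVec x = K⁻¹.mulVec (fun i => (b i : ℂ))) :
    (Vᵀ.mulVec (fun i => (c i : ℂ))) ⬝ᵥ Kr⁻¹.mulVec (Wᵀ.mulVec (fun i => (b i : ℂ)))
      = (fun i => (c i : ℂ)) ⬝ᵥ K⁻¹.mulVec (fun i => (b i : ℂ)) := by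
  rw [hKr, smul_mul_mul_sub_mul_mul, ← hK] at hinvr ⊢
  exact transpose_mulVec_dotProduct_inv_mul_mul_mulVec hinv hinvr _ _ hrange
end

section
/- Let E, A be n×n real matrices, b, c ∈ ℝⁿ, and let ζ ∈ ℂ be such that ζE − A is invertible. Suppose V, W ∈ ℂ^{n×r} are such that (ζE − A)^{−T}c ∈ Range(W), and σ ↦ σEᵣ − Aᵣ with Eᵣ = WᵀEV, Aᵣ = WᵀAV is invertible at ζ. Then Gᵣ(ζ) = G(ζ), where G(s) = cᵀ(sE − A)⁻¹b and Gᵣ(s) = cᵀV(sEᵣ − Aᵣ)⁻¹Wᵀb. -/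
open Matrix

/-! The output condition says that `W y` solves the dual system `Kᵀ x = c` for `K = ζE - A`.
Projecting, `y` then solves the reduced dual system `Krᵀ y = Vᵀ c` for `Kr = Wᵀ K V`, and both
transfer values collapse to the same number `y ⬝ᵥ Wᵀ b`: for any invertible `K` and any solution
of `Kᵀ x = c`, one has `c ⬝ᵥ K⁻¹ b = x ⬝ᵥ K K⁻¹ b = x ⬝ᵥ b`. -/

namespace Matrix

variable {R : Type*} [CommRing R] {m p : Type*} [Fintype m]

theorem mul_smul_sub_mul (L : Matrix p m R) (E A : Matrix m m R) (Q : Matrix m p R) (ζ : R) :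
    L * (ζ • E - A) * Q = ζ • (L * E * Q) - L * A * Q := by
  rw [Matrix.mul_sub, Matrix.sub_mul, Matrix.mul_smul, Matrix.smul_mul]

variable [DecidableEq m]

theorem transpose_mulVec_inv_transpose_mulVec {K : Matrix m m R} (hK : IsUnit K) (c : m → R) :
    Kᵀ *ᵥ (K⁻¹ᵀ *ᵥ c) = c := by
  rw [mulVec_mulVec, ← transpose_mul, nonsing_inv_mul K ((isUnit_iff_isUnit_det K).mp hK),
    transpose_one, one_mulVec]

theorem dotProduct_inv_mulVec_of_transpose_mulVec_eq {K : Matrix m m R} (hK : IsUnit K)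
    {x c : m → R} (hx : Kᵀ *ᵥ x = c) (b : m → R) :
    c ⬝ᵥ K⁻¹ *ᵥ b = x ⬝ᵥ b := by
  rw [← hx, mulVec_transpose, ← dotProduct_mulVec, mulVec_mulVec,
    mul_nonsing_inv K ((isUnit_iff_isUnit_det K).mp hK), one_mulVec]

variable [Fintype p] [DecidableEq p]

theorem dotProduct_projection_inv_mulVec_eq {K : Matrix m m R} (V W : Matrix m p R)
    (hK : IsUnit K) (hKr : IsUnit (Wᵀ * K * V)) {y : p → R} {c : m → R}
    (hy : Kᵀ *ᵥ (W *ᵥ y) = c) (b : m → R) :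
    (Vᵀ *ᵥ c) ⬝ᵥ (Wᵀ * K * V)⁻¹ *ᵥ (Wᵀ *ᵥ b) = c ⬝ᵥ K⁻¹ *ᵥ b := by
  have hyr : (Wᵀ * K * V)ᵀ *ᵥ y = Vᵀ *ᵥ c := by
    rw [← hy, transpose_mul, transpose_mul, transpose_transpose, mulVec_mulVec, mulVec_mulVec,
      Matrix.mul_assoc]
  rw [dotProduct_inv_mulVec_of_transpose_mulVec_eq hKr hyr,
    dotProduct_inv_mulVec_of_transpose_mulVec_eq hK hy, dotProduct_mulVec, vecMul_transpose]

end Matrix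

/-- Interpolation at ζ via the output rational Krylov condition:
if `(ζE - A)⁻ᵀ c ∈ Range(W)` then the Petrov–Galerkin reduced model matches
the transfer function at ζ: `Gᵣ(ζ) = G(ζ)`. -/
theorem reduced_transfer_interpolates_output
    {n r : ℕ} (E A : Matrix (Fin n) (Fin n) ℝ) (b c : Fin n → ℝ)
    (ζ : ℂ) (V W : Matrix (Fin n) (Fin r) ℂ)
    (K : Matrix (Fin n) (Fin n) ℂ)
    (hK : K = ζ • E.map (Complex.ofReal) - A.map (Complex.ofReal))
    (Kr : Matrix (Fin r) (Fin r) ℂ)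
    (hKr : Kr = ζ • (Wᵀ * E.map (Complex.ofReal) * V) - Wᵀ * A.map (Complex.ofReal) * V)
    (hinv : IsUnit K)
    (hinvr : IsUnit Kr)
    (hrange : ∃ y : Fin r → ℂ, W.mulVec y = (K⁻¹)ᵀ.mulVec (fun i => (c i : ℂ))) :
    (Vᵀ.mulVec (fun i => (c i : ℂ))) ⬝ᵥ Kr⁻¹.mulVec (Wᵀ.mulVec (fun i => (b i : ℂ)))
      = (fun i => (c i : ℂ)) ⬝ᵥ K⁻¹.mulVec (fun i => (b i : ℂ)) := by
  obtain ⟨y, hy⟩ := hrange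
  have hKr_proj : Kr = Wᵀ * K * V := by rw [hKr, hK, mul_smul_sub_mul]
  subst hKr_proj
  exact dotProduct_projection_inv_mulVec_eq V W hinv hinvr
    (hy ▸ transpose_mulVec_inv_transpose_mulVec hinv _) _
end

section
/- Let E, A be n×n matrices, b, c ∈ ℝⁿ, σ ∈ ℂ with σE − A invertible. Suppose V, W ∈ ℂ^{n×r} satisfy both (σE − A)⁻¹b ∈ Range(V) and (σE − A)^{−T}c ∈ Range(W), and σEᵣ − Aᵣ is invertible where Eᵣ = WᵀEV, Aᵣ = WᵀAV. Then additionally the derivatives match: G′(σ) = Gᵣ′(σ), where G(s) = cᵀ(sE − A)⁻¹b, Gᵣ(s) = cᵀV(sEᵣ − Aᵣ)⁻¹Wᵀb, and G′(σ) = −cᵀ(σE − A)⁻¹E(σE − A)⁻¹b (similarly for Gᵣ′). -/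
open Matrix

/-
With `K = σE - A`, the full derivative is `-(K⁻ᵀ c) ⬝ E (K⁻¹ b)`, and both solves lie in the
projection spaces: `K⁻¹ b = V x`, `K⁻ᵀ c = W y`, so it equals `-y ⬝ (WᵀEV) x`. Since `Kᵣ = WᵀKV`,
`Kᵣ x = Wᵀ K V x = Wᵀ b` and likewise `Kᵣᵀ y = Vᵀ c`: `x` and `y` are exactly the reduced
solves in `Gᵣ'(σ)`.
-/

namespace Matrix

variable {m n R : Type*} [Fintype m] [Fintype n] [DecidableEq m] [DecidableEq n] [CommRing R]

theorem projected_inv_mulVec_eq {K : Matrix n n R} {V W : Matrix n m R} {b : n → R}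
    {x : m → R} (hK : IsUnit K) (hKr : IsUnit (Wᵀ * K * V)) (hx : V *ᵥ x = K⁻¹ *ᵥ b) :
    (Wᵀ * K * V)⁻¹ *ᵥ (Wᵀ *ᵥ b) = x := by
  have hKVx : K *ᵥ (V *ᵥ x) = b := by
    rw [hx, mulVec_mulVec, mul_nonsing_inv K ((isUnit_iff_isUnit_det K).mp hK), one_mulVec]
  have hKrx : (Wᵀ * K * V) *ᵥ x = Wᵀ *ᵥ b := by
    rw [← hKVx, mulVec_mulVec, mulVec_mulVec, Matrix.mul_assoc]
  rw [← hKrx, mulVec_mulVec, nonsing_inv_mul _ ((isUnit_iff_isUnit_det _).mp hKr), one_mulVec]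

theorem projected_inv_transpose_mulVec_eq {K : Matrix n n R} {V W : Matrix n m R}
    {c : n → R} {y : m → R} (hK : IsUnit K) (hKr : IsUnit (Wᵀ * K * V))
    (hy : W *ᵥ y = K⁻¹ᵀ *ᵥ c) :
    (Wᵀ * K * V)⁻¹ᵀ *ᵥ (Vᵀ *ᵥ c) = y := by
  have hKr' : (Wᵀ * K * V)ᵀ = Vᵀ * Kᵀ * W := by
    rw [transpose_mul, transpose_mul, transpose_transpose, Matrix.mul_assoc]
  rw [transpose_nonsing_inv, hKr']
  rw [transpose_nonsing_inv] at hy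
  exact projected_inv_mulVec_eq ((isUnit_transpose K).mpr hK)
    (hKr' ▸ (isUnit_transpose _).mpr hKr) hy

theorem projected_dotProduct_inv_mulVec_mulVec_inv_mulVec_eq {K M : Matrix n n R}
    {V W : Matrix n m R} {b c : n → R} (hK : IsUnit K) (hKr : IsUnit (Wᵀ * K * V))
    (hV : ∃ x, V *ᵥ x = K⁻¹ *ᵥ b) (hW : ∃ y, W *ᵥ y = K⁻¹ᵀ *ᵥ c) :
    c ⬝ᵥ K⁻¹ *ᵥ (M *ᵥ (K⁻¹ *ᵥ b))
      = Vᵀ *ᵥ c ⬝ᵥ (Wᵀ * K * V)⁻¹ *ᵥ ((Wᵀ * M * V) *ᵥ ((Wᵀ * K * V)⁻¹ *ᵥ (Wᵀ *ᵥ b))) := by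
  obtain ⟨x, hx⟩ := hV
  obtain ⟨y, hy⟩ := hW
  calc c ⬝ᵥ K⁻¹ *ᵥ (M *ᵥ (K⁻¹ *ᵥ b))
      = K⁻¹ᵀ *ᵥ c ⬝ᵥ M *ᵥ (K⁻¹ *ᵥ b) := by
        rw [dotProduct_mulVec, mulVec_transpose]
    _ = W *ᵥ y ⬝ᵥ M *ᵥ (V *ᵥ x) := by rw [hx, hy]
    _ = y ⬝ᵥ (Wᵀ * M * V) *ᵥ x := by
      rw [← mulVec_mulVec, ← mulVec_mulVec, dotProduct_mulVec y, vecMul_transpose]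
    _ = Vᵀ *ᵥ c ⬝ᵥ (Wᵀ * K * V)⁻¹ *ᵥ ((Wᵀ * M * V) *ᵥ ((Wᵀ * K * V)⁻¹ *ᵥ (Wᵀ *ᵥ b))) := by
      rw [projected_inv_mulVec_eq hK hKr hx, ← projected_inv_transpose_mulVec_eq hK hKr hy,
        dotProduct_mulVec _ (Wᵀ * K * V)⁻¹, mulVec_transpose]

end Matrix

/-- Hermite interpolation for two-sided projection: if both
`(σE - A)⁻¹ b ∈ Range(V)` and `(σE - A)⁻ᵀ c ∈ Range(W)`, then the derivatives
of the transfer functions match at σ: `G'(σ) = Gᵣ'(σ)`, where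
`G'(σ) = -cᵀ(σE - A)⁻¹ E (σE - A)⁻¹ b` and similarly for `Gᵣ'`. -/
theorem reduced_transfer_hermite_interpolation
    {n r : ℕ} (E A : Matrix (Fin n) (Fin n) ℝ) (b c : Fin n → ℝ)
    (σ : ℂ) (V W : Matrix (Fin n) (Fin r) ℂ)
    (K : Matrix (Fin n) (Fin n) ℂ)
    (hK : K = σ • E.map (Complex.ofReal) - A.map (Complex.ofReal))
    (Er Ar : Matrix (Fin r) (Fin r) ℂ)
    (hEr : Er = Wᵀ * E.map (Complex.ofReal) * V)
    (hAr : Ar = Wᵀ * A.map (Complex.ofReal) * V)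
    (Kr : Matrix (Fin r) (Fin r) ℂ)
    (hKr : Kr = σ • Er - Ar)
    (hinv : IsUnit K)
    (hinvr : IsUnit Kr)
    (hrangeV : ∃ x : Fin r → ℂ, V.mulVec x = K⁻¹.mulVec (fun i => (b i : ℂ)))
    (hrangeW : ∃ y : Fin r → ℂ, W.mulVec y = (K⁻¹)ᵀ.mulVec (fun i => (c i : ℂ))) :
    -((fun i => (c i : ℂ)) ⬝ᵥ K⁻¹.mulVec ((E.map (Complex.ofReal)).mulVec (K⁻¹.mulVec (fun i => (b i : ℂ)))))
      = -((Vᵀ.mulVec (fun i => (c i : ℂ))) ⬝ᵥ Kr⁻¹.mulVec (Er.mulVec (Kr⁻¹.mulVec (Wᵀ.mulVec (fun i => (b i : ℂ)))))) := by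
  have hKr' : Kr = Wᵀ * K * V := by
    simp only [hKr, hK, hEr, hAr, Matrix.mul_sub, Matrix.sub_mul, Matrix.mul_smul, Matrix.smul_mul]
  subst hEr hKr'
  exact congrArg Neg.neg
    (projected_dotProduct_inv_mulVec_mulVec_inv_mulVec_eq hinv hinvr hrangeV hrangeW)
end

section
/- Let W be a proper rational function with simple poles γ₁,…,γ_p, all in the open left half-plane, and let G be strictly proper rational with all poles in the open left half-plane, no pole of G equal to any −γ_k. Define F(s) = G(s)W(s)W(−s) + Σ_{k=1}^{p} G(−γ_k)W(−γ_k)·res[W, γ_k]/(s + γ_k). Then F has no poles in the closed right half-plane; i.e., every pole of F has negative real part. -/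
open Topology Filter

/-!
Write `f = G W`, which is analytic on the closed right half-plane because the poles of `G` and
of `W` lie in the open left half-plane. Expanding `W(-s) = w∞ + Σₖ ρₖ/(-s-γₖ)` gives
`F(s) = w∞ f(s) + Σₖ (f(s) ρₖ/(-s-γₖ) + f(-γₖ) ρₖ/(s+γₖ)) = w∞ f(s) - Σₖ ρₖ (f(s) - f(-γₖ))/(s+γₖ)`,
and each difference quotient `dslope f (-γₖ)` is analytic wherever `f` is.
-/

theorem AnalyticAt.dslope {𝕜 E : Type*} [NontriviallyNormedField 𝕜] [NormedAddCommGroup E]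
    [NormedSpace 𝕜 E] {f : 𝕜 → E} {z : 𝕜} (c : 𝕜) (hf : AnalyticAt 𝕜 f z) :
    AnalyticAt 𝕜 (dslope f c) z := by
  rcases eq_or_ne z c with rfl | hzc
  · obtain ⟨q, hq⟩ := hf
    exact ⟨q.fslope, hq.has_fpower_series_dslope_fslope⟩
  · have hslope : AnalyticAt 𝕜 (fun s => (s - c)⁻¹ • (f s - f c)) z :=
      ((analyticAt_id.sub analyticAt_const).inv (sub_ne_zero.2 hzc)).smul
        (hf.sub analyticAt_const)
    refine hslope.congr ?_
    filter_upwards [eventually_ne_nhds hzc] with s hs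
    rw [dslope_of_ne f hs, slope_def_module]

theorem eventually_ne_nhdsNE {X : Type*} [TopologicalSpace X] [T1Space X] (a b : X) :
    ∀ᶠ x in 𝓝[≠] a, x ≠ b := by
  rcases eq_or_ne a b with rfl | hab
  · exact self_mem_nhdsWithin
  · exact eventually_ne_nhdsWithin hab

theorem mul_div_neg_sub_add_div_add_eq_neg_mul_dslope (f : ℂ → ℂ) {a γ s : ℂ} (hs : s ≠ -γ) :
    f s * (a / (-s - γ)) + f (-γ) * a / (s + γ) = -a * dslope f (-γ) s := by
  have hsγ : s + γ ≠ 0 := fun h => hs (eq_neg_of_add_eq_zero_left h)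
  have hneg : -s - γ = -(s + γ) := by ring
  rw [dslope_of_ne f hs, slope_def_field, sub_neg_eq_add, hneg]
  field_simp
  ring

theorem analyticAt_const_add_sum_div_sub {ι : Type*} (t : Finset ι) (w : ℂ) (ρ γ : ι → ℂ)
    {z : ℂ} (hz : ∀ k ∈ t, z ≠ γ k) :
    AnalyticAt ℂ (fun s => w + ∑ k ∈ t, ρ k / (s - γ k)) z :=
  analyticAt_const.add <| Finset.analyticAt_fun_sum _ fun k hk =>
    analyticAt_const.div (analyticAt_id.sub analyticAt_const) (sub_ne_zero.2 (hz k hk))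

theorem Fmap_no_poles_in_closed_rhp_general
    {p : ℕ} (gam : Fin p → ℂ) (ρ : Fin p → ℂ) (winf : ℂ)
    (P Q : Polynomial ℂ) (G W F : ℂ → ℂ)
    (hG : G = fun s => P.eval s / Q.eval s)
    (hW : W = fun s => winf + ∑ k, ρ k / (s - gam k))
    (hQstable : ∀ z, Q.IsRoot z → z.re < 0)
    (hgam : ∀ k, (gam k).re < 0)
    (hF : F = fun s => G s * W s * W (-s)
        + ∑ k, G (-(gam k)) * W (-(gam k)) * ρ k / (s + gam k)) :
    ∀ z : ℂ, 0 ≤ z.re →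
      ∃ h : ℂ → ℂ, AnalyticAt ℂ h z ∧ ∀ᶠ s in 𝓝[≠] z, F s = h s := by
  intro z hz
  have hG_an : AnalyticAt ℂ G z := hG ▸ (P.differentiable.analyticAt z).div
    (Q.differentiable.analyticAt z) fun hQz => (hQstable z hQz).not_ge hz
  have hW_an : AnalyticAt ℂ W z := hW ▸ analyticAt_const_add_sum_div_sub _ winf ρ gam
    fun k _ hzk => (hgam k).not_ge (hzk ▸ hz)
  have hGW : AnalyticAt ℂ (fun s => G s * W s) z := hG_an.mul hW_an
  refine ⟨fun s => G s * W s * winf + ∑ k, -ρ k * dslope (fun s => G s * W s) (-gam k) s,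
    (hGW.mul analyticAt_const).add
      (Finset.analyticAt_fun_sum _ fun k _ => analyticAt_const.mul (hGW.dslope _)), ?_⟩
  filter_upwards [eventually_all.2 fun k => eventually_ne_nhdsNE z (-gam k)] with s hs
  have hW_neg : W (-s) = winf + ∑ k, ρ k / (-s - gam k) := by rw [hW]
  calc F s = G s * W s * winf + ∑ k, (G s * W s * (ρ k / (-s - gam k))
        + G (-gam k) * W (-gam k) * ρ k / (s + gam k)) := by
        simp only [hF, hW_neg]
        rw [Finset.sum_add_distrib, mul_add, Finset.mul_sum, add_assoc]
    _ = _ := by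
        congr 1
        exact Finset.sum_congr rfl fun k _ =>
          mul_div_neg_sub_add_div_add_eq_neg_mul_dslope (fun s => G s * W s) (hs k)

/-- The map `𝔉` maps H2 into H2: with `W(s) = w∞ + Σₖ ρₖ/(s-γₖ)` proper with
simple stable poles and `G` strictly proper rational with stable poles
(none equal to any `-γₖ`),
`F(s) = G(s)W(s)W(-s) + Σₖ G(-γₖ)W(-γₖ)ρₖ/(s+γₖ)` has no poles in the closed
right half-plane: every point there is at worst a removable singularity. -/
theorem Fmap_no_poles_in_closed_rhp
    {p : ℕ} (gam : Fin p → ℂ) (ρ : Fin p → ℂ) (winf : ℂ)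
    (P Q : Polynomial ℂ) (G W F : ℂ → ℂ)
    (hG : G = fun s => P.eval s / Q.eval s)
    (hW : W = fun s => winf + ∑ k, ρ k / (s - gam k))
    (hQ : Q ≠ 0) (hdeg : P.degree < Q.degree)
    (hQstable : ∀ z, Q.IsRoot z → z.re < 0)
    (hgam : ∀ k, (gam k).re < 0) (hgam_inj : Function.Injective gam)
    (hnp : ∀ z, Q.IsRoot z → ∀ k, z ≠ -(gam k))
    (hF : F = fun s => G s * W s * W (-s)
        + ∑ k, G (-(gam k)) * W (-(gam k)) * ρ k / (s + gam k)) :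
    ∀ z : ℂ, 0 ≤ z.re →
      ∃ h : ℂ → ℂ, AnalyticAt ℂ h z ∧ ∀ᶠ s in 𝓝[≠] z, F s = h s :=
  Fmap_no_poles_in_closed_rhp_general gam ρ winf P Q G W F hG hW hQstable hgam hF
end
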